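/- arXiv:2103.02681 — 2 statements merged into one kernel-verified Lean document; each statement's English description precedes it below -/
import Mathlib

section
/- Let ε > 0 and λ > 0. Suppose there exists z* > 0 such that the set prox_{λg}(z*) contains both 0 and some positive number. Then for every z ∈ ℝ with |z| ≠ z*, the set prox_{λg}(z) is a singleton; more precisely, prox_{λg}(z) = {0} whenever |z| < z*, and prox_{λg}(z) consists of exactly one nonzero element whenever |z| > z*. -/
open Real Filter

/-- The scalar log-sum penalty `g(w) = log(1 + |w|/ε)`. -/
noncomputable def logpen (ε : ℝ) (w : ℝ) : ℝ := Real.log (1 + |w| / ε)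

/-- The objective `q_{λ,z}(x) = (1/(2λ))(x − z)² + g(x)`. -/
noncomputable def qfun (lam ε z x : ℝ) : ℝ :=
  1 / (2 * lam) * (x - z) ^ 2 + logpen ε x

/-- The proximity operator of `λ g` at `z`: the set of global minimizers of `q_{λ,z}`. -/
def prox (lam ε z : ℝ) : Set ℝ := {x | ∀ y : ℝ, qfun lam ε z x ≤ qfun lam ε z y}

/-- `r₁(z) = (z − ε)/2 − √((z + ε)²/4 − λ)`. -/
noncomputable def r1 (lam ε z : ℝ) : ℝ :=
  (z - ε) / 2 - Real.sqrt ((z + ε) ^ 2 / 4 - lam)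

/-- `r₂(z) = (z − ε)/2 + √((z + ε)²/4 − λ)`. -/
noncomputable def r2 (lam ε z : ℝ) : ℝ :=
  (z - ε) / 2 + Real.sqrt ((z + ε) ^ 2 / 4 - lam)

/-- `r(z) = q_{λ,z}(r₂(z)) − q_{λ,z}(0)`. -/
noncomputable def rfun (lam ε z : ℝ) : ℝ :=
  qfun lam ε z (r2 lam ε z) - qfun lam ε z 0

/-- The iteratively reweighted ℓ₁ iteration for `prox_{λ g}(z)`. -/
def IterRW (lam ε z : ℝ) (x : ℕ → ℝ) : Prop :=
  ∀ k : ℕ, x (k + 1) =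
    if |z| ≤ lam / (ε + |x k|) then 0
    else Real.sign z * (|z| - lam / (ε + |x k|))

/-! Minimizers share the sign of `z`, and for `x > 0` the gap `q_z(x) − q_z(0)` is strictly
decreasing in `z`: so `0` stays the unique minimizer below `z*`, and `0` stops being a minimizer
above `z*`. A positive minimizer `x` satisfies the quadratic critical-point equation
`(x − z)(ε + x) + λ = 0`; two distinct positive minimizers would, by Rolle's theorem, enclose a
third root of it, so a positive minimizer is unique. -/

section Prox

variable {lam ε z x : ℝ}

@[simp]
lemma logpen_zero : logpen ε 0 = 0 := by simp [logpen]

@[simp]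
lemma logpen_neg : logpen ε (-x) = logpen ε x := by simp [logpen]

lemma logpen_nonneg (hε : 0 < ε) (x : ℝ) : 0 ≤ logpen ε x :=
  Real.log_nonneg (le_add_of_nonneg_right (by positivity))

lemma qfun_neg : qfun lam ε (-z) x = qfun lam ε z (-x) := by
  simp only [qfun, logpen_neg]
  ring

lemma prox_neg : prox lam ε (-z) = -prox lam ε z := by
  ext x
  simp only [Set.mem_neg, prox, Set.mem_ofPred_eq, qfun_neg]
  exact (neg_surjective.forall (p := fun y => qfun lam ε z (-x) ≤ qfun lam ε z y)).symm

lemma prox_eq_singleton_of_forall_lt (h : ∀ y ≠ x, qfun lam ε z x < qfun lam ε z y) :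
    prox lam ε z = {x} := by
  refine Set.eq_singleton_iff_unique_mem.2 ⟨fun y => ?_, fun y hy => ?_⟩
  · rcases eq_or_ne y x with rfl | hyx
    exacts [le_rfl, (h y hyx).le]
  · by_contra hyx
    exact (hy x).not_gt (h y hyx)

lemma qfun_sub_qfun_zero_strictAnti (hlam : 0 < lam) (hx : 0 < x) :
    StrictAnti fun z => qfun lam ε z x - qfun lam ε z 0 := by
  intro z z' hzz'
  have key : ∀ z, qfun lam ε z x - qfun lam ε z 0 = (x ^ 2 - 2 * x * z) / (2 * lam) + logpen ε x :=
    fun z => by simp only [qfun, logpen_zero]; ring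
  simp only [key]
  gcongr

lemma qfun_lt_qfun_of_neg (hlam : 0 < lam) (hz : 0 < z) (hx : x < 0) :
    qfun lam ε z (-x) < qfun lam ε z x := by
  have hsq : (-x - z) ^ 2 < (x - z) ^ 2 := by nlinarith
  simp only [qfun, logpen_neg, add_lt_add_iff_right]
  exact mul_lt_mul_of_pos_left hsq (by positivity)

lemma nonneg_of_mem_prox (hlam : 0 < lam) (hz : 0 < z) (hx : x ∈ prox lam ε z) : 0 ≤ x :=
  not_lt.1 fun hx0 => (hx (-x)).not_gt (qfun_lt_qfun_of_neg hlam hz hx0)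

lemma continuous_qfun (hε : 0 < ε) : Continuous (qfun lam ε z) := by
  unfold qfun logpen
  refine (by fun_prop : Continuous fun x => 1 / (2 * lam) * (x - z) ^ 2).add
    ((by fun_prop : Continuous fun x => 1 + |x| / ε).log fun x => ?_)
  exact (lt_add_of_pos_of_le one_pos (by positivity)).ne'

lemma prox_nonempty (hε : 0 < ε) (hlam : 0 < lam) (z : ℝ) : (prox lam ε z).Nonempty := by
  have hdist : Tendsto (fun x => 1 / (2 * lam) * dist x z ^ 2) (cocompact ℝ) atTop :=
    ((tendsto_pow_atTop two_ne_zero).comp (tendsto_dist_right_cocompact_atTop z)).const_mul_atTop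
      (by positivity)
  refine (continuous_qfun hε).exists_forall_le (tendsto_atTop_mono (fun x => ?_) hdist)
  rw [Real.dist_eq, sq_abs]
  exact le_add_of_nonneg_right (logpen_nonneg hε x)

lemma hasDerivAt_qfun (hε : 0 < ε) (hx : 0 < x) :
    HasDerivAt (qfun lam ε z) ((x - z) / lam + 1 / (ε + x)) x := by
  have hlog : HasDerivAt (fun y => Real.log (1 + y / ε)) (1 / ε / (1 + x / ε)) x :=
    (((hasDerivAt_id x).div_const ε).const_add 1).log (by positivity)
  have hsq : HasDerivAt (fun y => 1 / (2 * lam) * (y - z) ^ 2) (1 / (2 * lam) * (2 * (x - z))) x :=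
    by simpa using (((hasDerivAt_id x).sub_const z).pow 2).const_mul (1 / (2 * lam))
  refine ((hsq.add hlog).congr_deriv ?_).congr_of_eventuallyEq ?_
  · field_simp
  · filter_upwards [eventually_gt_nhds hx] with y hy
    simp [qfun, logpen, abs_of_pos hy]

lemma critical_point_eq (hε : 0 < ε) (hlam : 0 < lam) (hx : 0 < x)
    (h : (x - z) / lam + 1 / (ε + x) = 0) : (x - z) * (ε + x) + lam = 0 := by
  field_simp at h
  linarith

lemma critical_point_eq_of_mem_prox (hε : 0 < ε) (hlam : 0 < lam) (hx : x ∈ prox lam ε z)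
    (hx0 : 0 < x) : (x - z) * (ε + x) + lam = 0 :=
  critical_point_eq hε hlam hx0 <|
    IsLocalMin.hasDerivAt_eq_zero (Eventually.of_forall hx) (hasDerivAt_qfun hε hx0)

lemma add_eq_of_critical_point_eq {b d : ℝ} (hb : (b - z) * (ε + b) + lam = 0)
    (hd : (d - z) * (ε + d) + lam = 0) (hbd : b ≠ d) : b + d = z - ε := by
  have : (b - d) * (b + d - (z - ε)) = 0 := by linear_combination hb - hd
  exact sub_eq_zero.1 ((mul_eq_zero.1 this).resolve_left (sub_ne_zero.2 hbd))

lemma eq_of_mem_prox_of_pos (hε : 0 < ε) (hlam : 0 < lam) {b c : ℝ} (hb : b ∈ prox lam ε z)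
    (hc : c ∈ prox lam ε z) (hb0 : 0 < b) (hc0 : 0 < c) : b = c := by
  wlog hbc : b < c generalizing b c
  · rcases (not_lt.1 hbc).eq_or_lt with h | h
    exacts [h.symm, (this hc hb hc0 hb0 h).symm]
  obtain ⟨d, ⟨hbd, hdc⟩, hd⟩ := exists_hasDerivAt_eq_zero hbc (continuous_qfun hε).continuousOn
    (le_antisymm (hb c) (hc b)) fun y hy => hasDerivAt_qfun hε (hb0.trans hy.1)
  have hd := critical_point_eq hε hlam (hb0.trans hbd) hd
  have hsum_b := add_eq_of_critical_point_eq (critical_point_eq_of_mem_prox hε hlam hb hb0) hd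
    hbd.ne
  have hsum_c := add_eq_of_critical_point_eq (critical_point_eq_of_mem_prox hε hlam hc hc0) hd
    hdc.ne'
  linarith

lemma prox_eq_zero_of_abs_lt (hlam : 0 < lam) {zs : ℝ} (h0 : 0 ∈ prox lam ε zs) (hz : |z| < zs) :
    prox lam ε z = {0} := by
  obtain ⟨hzs_lt_z, hz_lt_zs⟩ := abs_lt.1 hz
  refine prox_eq_singleton_of_forall_lt fun x hx => ?_
  rcases hx.lt_or_gt with hx | hx
  · have := qfun_sub_qfun_zero_strictAnti (ε := ε) hlam (neg_pos.2 hx) (neg_lt.1 hzs_lt_z)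
    dsimp only at this
    rw [qfun_neg, qfun_neg, neg_neg, neg_zero] at this
    linarith [h0 (-x)]
  · have := qfun_sub_qfun_zero_strictAnti (ε := ε) hlam hx hz_lt_zs
    linarith [h0 x]

lemma exists_prox_eq_singleton_pos (hε : 0 < ε) (hlam : 0 < lam) {zs a : ℝ} (hzs : 0 ≤ zs)
    (ha : a ∈ prox lam ε zs) (ha0 : 0 < a) (hz : zs < z) : ∃ b, 0 < b ∧ prox lam ε z = {b} := by
  have h0 : 0 ∉ prox lam ε z := fun h0 => by
    have := qfun_sub_qfun_zero_strictAnti (ε := ε) hlam ha0 hz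
    linarith [ha 0, h0 a]
  have hpos : ∀ x ∈ prox lam ε z, 0 < x := fun x hx =>
    (nonneg_of_mem_prox hlam (hzs.trans_lt hz) hx).lt_of_ne fun h => h0 (h ▸ hx)
  obtain ⟨b, hb⟩ := prox_nonempty hε hlam z
  exact ⟨b, hpos b hb, Set.eq_singleton_iff_unique_mem.2
    ⟨hb, fun x hx => eq_of_mem_prox_of_pos hε hlam hx hb (hpos x hx) (hpos b hb)⟩⟩

end Prox

/-- if `prox_{λg}(z*)` contains 0 and a positive number, it is a
singleton away from `±z*`. -/
theorem prox_singleton_away (ε lam zs : ℝ) (hε : 0 < ε) (hlam : 0 < lam)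
    (hzs : 0 < zs) (h0 : (0 : ℝ) ∈ prox lam ε zs)
    (hpos : ∃ a : ℝ, 0 < a ∧ a ∈ prox lam ε zs) :
    (∀ z : ℝ, |z| < zs → prox lam ε z = {0}) ∧
    (∀ z : ℝ, zs < |z| → ∃ a : ℝ, a ≠ 0 ∧ prox lam ε z = {a}) := by
  obtain ⟨a, ha0, ha⟩ := hpos
  refine ⟨fun z hz => prox_eq_zero_of_abs_lt hlam h0 hz, fun z hz => ?_⟩
  rcases le_or_gt 0 z with hz0 | hz0
  · rw [abs_of_nonneg hz0] at hz
    obtain ⟨b, hb0, hb⟩ := exists_prox_eq_singleton_pos hε hlam hzs.le ha ha0 hz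
    exact ⟨b, hb0.ne', hb⟩
  · rw [abs_of_neg hz0] at hz
    obtain ⟨b, hb0, hb⟩ := exists_prox_eq_singleton_pos hε hlam hzs.le ha ha0 hz
    refine ⟨-b, neg_ne_zero.2 hb0.ne', ?_⟩
    rw [← neg_neg z, prox_neg, hb, Set.neg_singleton]
end

section
/- Let ε > 0 and λ > 0 with √λ > ε. Let z ∈ [2√λ − ε, λ/ε), and let the sequence (x^{(k)})_{k≥0} be generated by the reweighted ℓ₁ iteration from an initial guess x^{(0)} ≥ 0. If x^{(0)} ∈ [0, r₁(z)), then the sequence (x^{(k)}) converges to 0; and if x^{(0)} = r₁(z), then the sequence is constantly equal to r₁(z), so it converges to r₁(z). Here r₁(z) = (z − ε)/2 − √((z + ε)²/4 − λ). -/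
open Real Filter

/-!
For `z > 0` and nonnegative iterates, one step of the iteration is `t ↦ max 0 (z - λ/(ε + t))`.
Since `(t - r₁)(t - r₂) = (ε + t)(t - z) + λ`, this map lies below the diagonal exactly where
`t ≤ r₁` or `t ≥ r₂`, and has `r₁` as a fixed point. An orbit started in `[0, r₁)` therefore
decreases to a fixed point of the map in `[0, r₁)`, and the only one there is `0`.
-/

noncomputable def rwStep (lam ε z t : ℝ) : ℝ := max 0 (z - lam / (ε + t))

theorem r1_le_r2 (lam ε z : ℝ) : r1 lam ε z ≤ r2 lam ε z := by
  unfold r1 r2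
  linarith [Real.sqrt_nonneg ((z + ε) ^ 2 / 4 - lam)]

section

variable {lam ε z : ℝ}

theorem IterRW.succ_eq_rwStep_abs (hz : 0 < z) {x : ℕ → ℝ} (hx : IterRW lam ε z x) (k : ℕ) :
    x (k + 1) = rwStep lam ε z |x k| := by
  rw [hx k, abs_of_pos hz, Real.sign_of_pos hz, one_mul, rwStep]
  split_ifs with hle
  · exact (max_eq_left (sub_nonpos.mpr hle)).symm
  · exact (max_eq_right (sub_pos.mpr (not_le.mp hle)).le).symm

theorem IterRW.nonneg (hz : 0 < z) {x : ℕ → ℝ} (hx : IterRW lam ε z x) (hx0 : 0 ≤ x 0) :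
    ∀ k, 0 ≤ x k
  | 0 => hx0
  | k + 1 => (hx.succ_eq_rwStep_abs hz k).symm ▸ le_max_left _ _

theorem IterRW.eq_iterate_rwStep (hz : 0 < z) {x : ℕ → ℝ} (hx : IterRW lam ε z x)
    (hx0 : 0 ≤ x 0) : ∀ k, x k = (rwStep lam ε z)^[k] (x 0)
  | 0 => rfl
  | k + 1 => by
    rw [hx.succ_eq_rwStep_abs hz k, abs_of_nonneg (hx.nonneg hz hx0 k),
      hx.eq_iterate_rwStep hz hx0 k, Function.iterate_succ_apply']

theorem sub_r1_mul_sub_r2 (hD : lam ≤ (z + ε) ^ 2 / 4) (t : ℝ) :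
    (t - r1 lam ε z) * (t - r2 lam ε z) = (ε + t) * (t - z) + lam := by
  have hs := Real.sq_sqrt (sub_nonneg.mpr hD)
  unfold r1 r2
  linear_combination (-1 : ℝ) * hs

theorem rwStep_r1 (hε : 0 < ε) (hD : lam ≤ (z + ε) ^ 2 / 4) (hr : 0 ≤ r1 lam ε z) :
    rwStep lam ε z (r1 lam ε z) = r1 lam ε z := by
  have hroot := sub_r1_mul_sub_r2 hD (r1 lam ε z)
  rw [sub_self, zero_mul] at hroot
  have hdiv : lam / (ε + r1 lam ε z) = z - r1 lam ε z := by
    rw [div_eq_iff (by positivity)]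
    linear_combination (-1 : ℝ) * hroot
  rw [rwStep, hdiv, sub_sub_cancel, max_eq_right hr]

theorem rwStep_le_self (hε : 0 < ε) (hD : lam ≤ (z + ε) ^ 2 / 4) {t : ℝ} (ht : 0 ≤ t)
    (htr : t ≤ r1 lam ε z) : rwStep lam ε z t ≤ t := by
  have hprod : 0 ≤ (t - r1 lam ε z) * (t - r2 lam ε z) :=
    mul_nonneg_of_nonpos_of_nonpos (by linarith) (by linarith [r1_le_r2 lam ε z])
  rw [sub_r1_mul_sub_r2 hD] at hprod
  refine max_le ht ?_
  rw [sub_le_comm, le_div_iff₀ (by positivity)]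
  linarith

theorem rwStep_lt_self (hε : 0 < ε) (hD : lam ≤ (z + ε) ^ 2 / 4) {t : ℝ} (ht : 0 < t)
    (htr : t < r1 lam ε z) : rwStep lam ε z t < t := by
  have hprod : 0 < (t - r1 lam ε z) * (t - r2 lam ε z) :=
    mul_pos_of_neg_of_neg (by linarith) (by linarith [r1_le_r2 lam ε z])
  rw [sub_r1_mul_sub_r2 hD] at hprod
  refine max_lt ht ?_
  rw [sub_lt_comm, lt_div_iff₀ (by positivity)]
  linarith

theorem mapsTo_rwStep_Ico (hε : 0 < ε) (hD : lam ≤ (z + ε) ^ 2 / 4) :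
    Set.MapsTo (rwStep lam ε z) (Set.Ico 0 (r1 lam ε z)) (Set.Ico 0 (r1 lam ε z)) :=
  fun _ ht => ⟨le_max_left _ _, (rwStep_le_self hε hD ht.1 ht.2.le).trans_lt ht.2⟩

theorem continuousAt_rwStep {t : ℝ} (ht : ε + t ≠ 0) : ContinuousAt (rwStep lam ε z) t := by
  unfold rwStep
  fun_prop (disch := exact ht)

theorem tendsto_iterate_rwStep_zero (hε : 0 < ε) (hD : lam ≤ (z + ε) ^ 2 / 4) {t : ℝ}
    (ht : t ∈ Set.Ico 0 (r1 lam ε z)) :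
    Tendsto (fun n => (rwStep lam ε z)^[n] t) atTop (nhds 0) := by
  set u := fun n => (rwStep lam ε z)^[n] t
  have hu : ∀ n, u n ∈ Set.Ico 0 (r1 lam ε z) := fun n =>
    (mapsTo_rwStep_Ico hε hD).iterate n ht
  have hanti : Antitone u := antitone_nat_of_succ_le fun n => by
    simp only [u, Function.iterate_succ_apply']
    exact rwStep_le_self hε hD (hu n).1 (hu n).2.le
  have hbdd : BddBelow (Set.range u) := ⟨0, by rintro _ ⟨n, rfl⟩; exact (hu n).1⟩
  have hlim := tendsto_atTop_ciInf hanti hbdd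
  have hL0 : 0 ≤ ⨅ n, u n := le_ciInf fun n => (hu n).1
  have hLr : ⨅ n, u n < r1 lam ε z := (ciInf_le hbdd 0).trans_lt (hu 0).2
  have hfix := isFixedPt_of_tendsto_iterate hlim (continuousAt_rwStep (by positivity))
  obtain hL | hL := hL0.eq_or_lt
  · rwa [← hL] at hlim
  · exact absurd hfix (rwStep_lt_self hε hD hL hLr).ne

end

theorem iterRW_conv_mid_z_below_r1_general (ε lam z : ℝ) (hε : 0 < ε)
    (h : ε < Real.sqrt lam)
    (hz : z ∈ Set.Ico (2 * Real.sqrt lam - ε) (lam / ε))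
    (x : ℕ → ℝ) (hx0 : 0 ≤ x 0) (hiter : IterRW lam ε z x) :
    (x 0 < r1 lam ε z → Filter.Tendsto x Filter.atTop (nhds 0)) ∧
    (x 0 = r1 lam ε z → (∀ k : ℕ, x k = r1 lam ε z) ∧
      Filter.Tendsto x Filter.atTop (nhds (r1 lam ε z))) := by
  have hlam : 0 < lam := Real.sqrt_pos.mp (hε.trans h)
  have hz0 : 0 < z := by linarith [hz.1]
  have hD : lam ≤ (z + ε) ^ 2 / 4 := by nlinarith [hz.1, Real.sq_sqrt hlam.le]
  have horbit := hiter.eq_iterate_rwStep hz0 hx0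
  refine ⟨fun hlt => funext horbit ▸ tendsto_iterate_rwStep_zero hε hD ⟨hx0, hlt⟩, fun heq => ?_⟩
  have hconst : ∀ k, x k = r1 lam ε z := fun k => by
    rw [horbit, heq, Function.iterate_fixed (rwStep_r1 hε hD (heq ▸ hx0))]
  exact ⟨hconst, by simpa only [funext hconst] using tendsto_const_nhds⟩

/-- for `√λ > ε` and `z ∈ [2√λ − ε, λ/ε)`, initializations below
`r₁(z)` lead to 0 and initialization at `r₁(z)` stays at `r₁(z)`. -/
theorem iterRW_conv_mid_z_below_r1 (ε lam z : ℝ) (hε : 0 < ε) (hlam : 0 < lam)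
    (h : ε < Real.sqrt lam)
    (hz : z ∈ Set.Ico (2 * Real.sqrt lam - ε) (lam / ε))
    (x : ℕ → ℝ) (hx0 : 0 ≤ x 0) (hiter : IterRW lam ε z x) :
    (x 0 < r1 lam ε z → Filter.Tendsto x Filter.atTop (nhds 0)) ∧
    (x 0 = r1 lam ε z → (∀ k : ℕ, x k = r1 lam ε z) ∧
      Filter.Tendsto x Filter.atTop (nhds (r1 lam ε z))) :=
  iterRW_conv_mid_z_below_r1_general ε lam z hε h hz x hx0 hiter
end
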